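/- arXiv:1609.09369 — 5 statements merged into one kernel-verified Lean document; each statement's English description precedes it below -/
import Mathlib

section
/- For T: X ⇉ X* and x ∈ X, the set V_T(x) = {y ∈ X : ∃ y* ∈ T(y), ⟨x−y, y*⟩ > 0} is empty if and only if T^ν(x) = X*. -/
open NormedSpace

variable {X : Type*} [NormedAddCommGroup X] [NormedSpace ℝ X]

/-- quasimonotone relation: (x,x*) ∼q (y,y*) iff min{⟨y−x,x*⟩, ⟨x−y,y*⟩} ≤ 0 -/
def qrel (p q : X × StrongDual ℝ X) : Prop :=
  min (p.2 (q.1 - p.1)) (q.2 (p.1 - q.1)) ≤ 0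

/-- quasimonotone polar -/
def qpolar (T : Set (X × StrongDual ℝ X)) : Set (X × StrongDual ℝ X) :=
  {p | ∀ q ∈ T, qrel p q}

/-- imagewise conic hull of an operator -/
def coneOp (T : Set (X × StrongDual ℝ X)) : Set (X × StrongDual ℝ X) :=
  {p | ∃ t : ℝ, 0 ≤ t ∧ ∃ v, (p.1, v) ∈ T ∧ p.2 = t • v}

def QuasiMono (T : Set (X × StrongDual ℝ X)) : Prop := ∀ p ∈ T, ∀ q ∈ T, qrel p q

def MaxQuasiMono (T : Set (X × StrongDual ℝ X)) : Prop :=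
  QuasiMono T ∧ ∀ S, QuasiMono S → T ⊆ S → S = T

def Vset (T : Set (X × StrongDual ℝ X)) (x : X) : Set X :=
  {y | ∃ y' : StrongDual ℝ X, (y, y') ∈ T ∧ 0 < y' (x - y)}

/-- the image T^ν(x) of the quasimonotone polar -/
def polarIm (T : Set (X × StrongDual ℝ X)) (x : X) : Set (StrongDual ℝ X) :=
  {x' | (x, x') ∈ qpolar T}

/-- normal cone of C at x (no convexity or membership assumed) -/
def normalCone (C : Set X) (x : X) : Set (StrongDual ℝ X) :=
  {x' | ∀ y ∈ C, x' (y - x) ≤ 0}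

def im (T : Set (X × StrongDual ℝ X)) (x : X) : Set (StrongDual ℝ X) := {v | (x, v) ∈ T}

/-- effective domain: T(u) nonempty and ≠ {0} -/
def edom (T : Set (X × StrongDual ℝ X)) : Set X :=
  {u | (im T u).Nonempty ∧ im T u ≠ {0}}

/-- conic hull of a set in the dual -/
def coneSet (A : Set (StrongDual ℝ X)) : Set (StrongDual ℝ X) :=
  {v | ∃ t : ℝ, 0 ≤ t ∧ ∃ a ∈ A, v = t • a}

def Eset (T : Set (X × StrongDual ℝ X)) : Set X := {x | Vset T x = ∅}

/-- solution set of the Minty variational inequality for S on K -/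
def Minty (S : Set (X × StrongDual ℝ X)) (K : Set X) : Set X :=
  {x ∈ K | ∀ q ∈ S, q.1 ∈ K → q.2 (x - q.1) ≤ 0}

def AEMaxQuasiMono (T : Set (X × StrongDual ℝ X)) : Prop :=
  QuasiMono T ∧ ∀ S, QuasiMono S → (∀ x ∈ edom T, im T x ⊆ coneSet (im S x)) →
    (∀ x ∈ edom T, coneSet (im T x) = coneSet (im S x)) ∧ edom T = edom S

theorem Vset_eq_empty_iff (T : Set (X × StrongDual ℝ X)) (x : X) :
    Vset T x = ∅ ↔ ∀ q ∈ T, q.2 (x - q.1) ≤ 0 := by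
  simp only [Set.eq_empty_iff_forall_notMem, Vset, Set.mem_ofPred_eq, not_exists, not_and,
    not_lt, Prod.forall]

/-- The nontrivial direction is Hahn–Banach: if `q.1 ≠ x`, some `x'` is positive on `q.1 - x`. -/
theorem forall_qrel_iff (x : X) (q : X × StrongDual ℝ X) :
    (∀ x' : StrongDual ℝ X, qrel (x, x') q) ↔ q.2 (x - q.1) ≤ 0 := by
  refine ⟨fun h => ?_, fun h x' => min_le_of_right_le h⟩
  by_contra! hpos
  have hne : q.1 - x ≠ 0 := fun h0 => by
    rw [← neg_sub, h0, neg_zero, map_zero] at hpos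
    exact hpos.false
  obtain ⟨g, hg⟩ := SeparatingDual.exists_eq_one (R := ℝ) hne
  rcases min_le_iff.mp (h g) with hg' | hq
  · simp only [hg] at hg'
    linarith
  · exact hq.not_gt hpos

theorem stmt8_general (T : Set (X × StrongDual ℝ X)) (x : X) :
    Vset T x = ∅ ↔ polarIm T x = Set.univ := by
  rw [Vset_eq_empty_iff, Set.eq_univ_iff_forall]
  simp only [polarIm, qpolar, Set.mem_ofPred_eq, ← forall_qrel_iff x]
  exact ⟨fun h x' q hq => h q hq x', fun h q hq x' => h x' q hq⟩

theorem stmt8 [CompleteSpace X] (T : Set (X × StrongDual ℝ X)) (x : X) :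
    Vset T x = ∅ ↔ polarIm T x = Set.univ :=
  stmt8_general T x
end

section
/- If V_T(x) ≠ ∅, then T^ν(x) equals the normal cone N_{V_T(x)}(x) of the set V_T(x) at x. -/
open NormedSpace

variable {X : Type*} [NormedAddCommGroup X] [NormedSpace ℝ X]

theorem qrel_iff_imp {p q : X × StrongDual ℝ X} :
    qrel p q ↔ (0 < q.2 (p.1 - q.1) → p.2 (q.1 - p.1) ≤ 0) := by
  simp only [qrel, min_le_iff, or_iff_not_imp_right, not_le]

theorem stmt9_general (T : Set (X × StrongDual ℝ X)) (x : X) :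
    polarIm T x = normalCone (Vset T x) x := by
  ext x'
  simp only [polarIm, qpolar, normalCone, Vset, qrel_iff_imp, Set.mem_ofPred_eq, Prod.forall,
    forall_exists_index, and_imp]

theorem stmt9 [CompleteSpace X] (T : Set (X × StrongDual ℝ X)) (x : X)
    (h : (Vset T x).Nonempty) :
    polarIm T x = normalCone (Vset T x) x :=
  stmt9_general T x
end

section
/- An operator T: X ⇉ X* is quasimonotone if and only if T ⊆ T^ν, if and only if T^{νν} ⊆ T^ν, if and only if T^{νν} is quasimonotone, if and only if cone(T) is quasimonotone, if and only if cone(T) ∪ (X × {0}) is quasimonotone. -/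
open NormedSpace

variable {X : Type*} [NormedAddCommGroup X] [NormedSpace ℝ X]

section

variable {T S : Set (X × StrongDual ℝ X)}

lemma qrel_comm {p q : X × StrongDual ℝ X} : qrel p q ↔ qrel q p := by
  simp only [qrel, min_comm]

lemma qrel_of_snd_eq_zero {p : X × StrongDual ℝ X} (q : X × StrongDual ℝ X) (hp : p.2 = 0) :
    qrel p q := by
  simp [qrel, hp]

lemma qrel_smul_smul {x y : X} {x' y' : StrongDual ℝ X} (h : qrel (x, x') (y, y'))
    {t s : ℝ} (ht : 0 ≤ t) (hs : 0 ≤ s) : qrel (x, t • x') (y, s • y') := by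
  simp only [qrel, smul_apply, smul_eq_mul] at h ⊢
  rcases min_le_iff.mp h with h | h
  · exact min_le_of_left_le (mul_nonpos_of_nonneg_of_nonpos ht h)
  · exact min_le_of_right_le (mul_nonpos_of_nonneg_of_nonpos hs h)

lemma QuasiMono.mono (hT : QuasiMono T) (hST : S ⊆ T) : QuasiMono S :=
  fun p hp q hq => hT p (hST hp) q (hST hq)

lemma quasiMono_iff_subset_qpolar : QuasiMono T ↔ T ⊆ qpolar T :=
  ⟨fun h p hp q hq => h p hp q hq, fun h _ hp q hq => h hp q hq⟩

lemma subset_qpolar_qpolar (T : Set (X × StrongDual ℝ X)) : T ⊆ qpolar (qpolar T) :=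
  fun _ hp _ hq => qrel_comm.mp (hq _ hp)

lemma qpolar_anti (h : S ⊆ T) : qpolar T ⊆ qpolar S :=
  fun _ hp _ hq => hp _ (h hq)

lemma quasiMono_iff_qpolar_qpolar_subset_qpolar :
    QuasiMono T ↔ qpolar (qpolar T) ⊆ qpolar T :=
  ⟨fun h => qpolar_anti (quasiMono_iff_subset_qpolar.mp h),
    fun h => quasiMono_iff_subset_qpolar.mpr ((subset_qpolar_qpolar T).trans h)⟩

lemma quasiMono_qpolar_qpolar_iff : QuasiMono (qpolar (qpolar T)) ↔ QuasiMono T :=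
  ⟨fun h => h.mono (subset_qpolar_qpolar T),
    fun h _ hp _ hq => hp _ (quasiMono_iff_qpolar_qpolar_subset_qpolar.mp h hq)⟩

lemma subset_coneOp (T : Set (X × StrongDual ℝ X)) : T ⊆ coneOp T :=
  fun p hp => ⟨1, zero_le_one, p.2, hp, (one_smul _ _).symm⟩

lemma quasiMono_coneOp_iff : QuasiMono (coneOp T) ↔ QuasiMono T := by
  refine ⟨fun h => h.mono (subset_coneOp T), fun h => ?_⟩
  rintro ⟨x, _⟩ ⟨t, ht, x', hx', rfl⟩ ⟨y, _⟩ ⟨s, hs, y', hy', rfl⟩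
  exact qrel_smul_smul (h _ hx' _ hy') ht hs

lemma quasiMono_union_zero_iff :
    QuasiMono (T ∪ Set.univ ×ˢ ({0} : Set (StrongDual ℝ X))) ↔ QuasiMono T := by
  refine ⟨fun h => h.mono Set.subset_union_left, fun h => ?_⟩
  rintro p (hp | ⟨-, hp⟩) q (hq | ⟨-, hq⟩)
  · exact h p hp q hq
  · exact qrel_comm.mp (qrel_of_snd_eq_zero p hq)
  · exact qrel_of_snd_eq_zero q hp
  · exact qrel_of_snd_eq_zero q hp

end

theorem stmt12_general (T : Set (X × StrongDual ℝ X)) :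
    (QuasiMono T ↔ T ⊆ qpolar T) ∧
    (QuasiMono T ↔ qpolar (qpolar T) ⊆ qpolar T) ∧
    (QuasiMono T ↔ QuasiMono (qpolar (qpolar T))) ∧
    (QuasiMono T ↔ QuasiMono (coneOp T)) ∧
    (QuasiMono T ↔ QuasiMono (coneOp T ∪ Set.univ ×ˢ ({0} : Set (StrongDual ℝ X)))) :=
  ⟨quasiMono_iff_subset_qpolar, quasiMono_iff_qpolar_qpolar_subset_qpolar,
    quasiMono_qpolar_qpolar_iff.symm, quasiMono_coneOp_iff.symm,
    (quasiMono_union_zero_iff.trans quasiMono_coneOp_iff).symm⟩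

theorem stmt12 [CompleteSpace X] (T : Set (X × StrongDual ℝ X)) :
    (QuasiMono T ↔ T ⊆ qpolar T) ∧
    (QuasiMono T ↔ qpolar (qpolar T) ⊆ qpolar T) ∧
    (QuasiMono T ↔ QuasiMono (qpolar (qpolar T))) ∧
    (QuasiMono T ↔ QuasiMono (coneOp T)) ∧
    (QuasiMono T ↔ QuasiMono (coneOp T ∪ Set.univ ×ˢ ({0} : Set (StrongDual ℝ X)))) :=
  stmt12_general T
end

section
/- The operator T = ℤ × {1} ⊆ ℝ × ℝ is pre-maximal quasimonotone (its polar T^ν = {(a,b) ∈ ℝ² : b ≥ 0} is quasimonotone) but not AE-maximal quasimonotone, since (1/2, 1) ∈ T^ν but (1/2, 1) ∉ cone(T) ∪ (ℝ × {0}). -/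
/-- quasimonotone polar on ℝ × ℝ with duality product ⟨x, x*⟩ = x·x* -/
def qpolarR (T : Set (ℝ × ℝ)) : Set (ℝ × ℝ) :=
  {p | ∀ q ∈ T, min ((q.1 - p.1) * p.2) ((p.1 - q.1) * q.2) ≤ 0}

def QuasiMonoR (T : Set (ℝ × ℝ)) : Prop :=
  ∀ p ∈ T, ∀ q ∈ T, min ((q.1 - p.1) * p.2) ((p.1 - q.1) * q.2) ≤ 0

def coneOpR (T : Set (ℝ × ℝ)) : Set (ℝ × ℝ) :=
  {p | ∃ t : ℝ, 0 ≤ t ∧ ∃ v, (p.1, v) ∈ T ∧ p.2 = t * v}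

lemma polar_eq :
    qpolarR {p : ℝ × ℝ | (∃ n : ℤ, p.1 = n) ∧ p.2 = 1} = {p : ℝ × ℝ | 0 ≤ p.2} := by
  ext p
  constructor
  · intro hp
    by_contra h
    simp only [Set.mem_setOf_eq, not_le] at h
    have := hp (((⌊p.1⌋ : ℤ) - 1 : ℤ), 1) ⟨⟨⌊p.1⌋ - 1, rfl⟩, rfl⟩
    simp only at this
    have h1 : ((⌊p.1⌋ : ℝ) - 1) - p.1 < 0 := by
      have := Int.floor_le p.1
      linarith
    have h2 : 0 < (((⌊p.1⌋ : ℤ) - 1 : ℤ) : ℝ) - p.1 → False := by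
      intro h2; push_cast at h2; linarith
    have hA : 0 < ((((⌊p.1⌋ : ℤ) - 1 : ℤ) : ℝ) - p.1) * p.2 := by
      apply mul_pos_of_neg_of_neg _ h
      push_cast; linarith
    have hB : 0 < (p.1 - (((⌊p.1⌋ : ℤ) - 1 : ℤ) : ℝ)) * 1 := by
      push_cast; linarith
    exact absurd this (not_le.mpr (lt_min hA hB))
  · intro hp q hq
    simp only [Set.mem_setOf_eq] at hp
    obtain ⟨⟨n, hn⟩, h1⟩ := hq
    rcases le_or_gt p.1 q.1 with h | h
    · exact min_le_of_right_le (by rw [h1]; nlinarith)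
    · exact min_le_of_left_le (by nlinarith)

theorem stmt17 :
    qpolarR {p : ℝ × ℝ | (∃ n : ℤ, p.1 = n) ∧ p.2 = 1} = {p : ℝ × ℝ | 0 ≤ p.2} ∧
    QuasiMonoR {p : ℝ × ℝ | (∃ n : ℤ, p.1 = n) ∧ p.2 = 1} ∧
    QuasiMonoR (qpolarR {p : ℝ × ℝ | (∃ n : ℤ, p.1 = n) ∧ p.2 = 1}) ∧
    ((1 / 2, 1) : ℝ × ℝ) ∈ qpolarR {p : ℝ × ℝ | (∃ n : ℤ, p.1 = n) ∧ p.2 = 1} ∧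
    ((1 / 2, 1) : ℝ × ℝ) ∉
      coneOpR {p : ℝ × ℝ | (∃ n : ℤ, p.1 = n) ∧ p.2 = 1} ∪
        Set.univ ×ˢ ({0} : Set ℝ) := by
  refine ⟨polar_eq, ?_, ?_, ?_, ?_⟩
  · intro p hp q hq
    rw [hp.2, hq.2]
    rcases le_or_gt p.1 q.1 with h | h
    · exact min_le_of_right_le (by nlinarith)
    · exact min_le_of_left_le (by nlinarith)
  · rw [polar_eq]
    intro p hp q hq
    simp only [Set.mem_setOf_eq] at hp hq
    rcases le_or_gt p.1 q.1 with h | h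
    · exact min_le_of_right_le (by nlinarith)
    · exact min_le_of_left_le (by nlinarith)
  · rw [polar_eq]; norm_num
  · rintro (⟨t, ht, v, ⟨⟨n, hn⟩, _⟩, _⟩ | h)
    · simp only at hn
      have : (2 : ℝ) * (1/2) = 2 * n := by rw [hn]
      norm_num at this
      exact_mod_cast (by omega : ¬ (1 : ℤ) = 2 * n) (by exact_mod_cast this)
    · simp at h
end

section
/- If T: X ⇉ X* is quasimonotone, then the set E_{T^ν} = {x ∈ X : V_{T^ν}(x) = ∅} contains at most one point. Moreover, if T is pre-maximal quasimonotone, then E_T = E_{T^ν}, and hence E_T contains at most one point. -/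
open NormedSpace

variable {X : Type*} [NormedAddCommGroup X] [NormedSpace ℝ X]

/-!
A point `x` with `V_T(x) = ∅` is paired with every functional in the quasimonotone polar: for
`(y, y') ∈ T`, `⟨x - y, y'⟩ ≤ 0` already makes `min {⟨y - x, v⟩, ⟨x - y, y'⟩} ≤ 0`. Since a
quasimonotone `T` lies in its polar, `E_{T^ν} ⊆ E_T`, so two distinct points `x, y ∈ E_{T^ν}`
would give `(y, v) ∈ T^ν` for a Hahn–Banach functional `v` with `⟨x - y, v⟩ > 0`, i.e.
`y ∈ V_{T^ν}(x)`. If `T^ν` is quasimonotone, the same functional trick applied at `x ∈ E_T`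
against a pair `(y, y') ∈ T^ν` gives the reverse inclusion.
-/

section

variable {S T : Set (X × StrongDual ℝ X)}

theorem exists_dual_pos_of_ne {u v : X} (h : u ≠ v) : ∃ g : StrongDual ℝ X, 0 < g (u - v) := by
  have hne : u - v ≠ 0 := sub_ne_zero.mpr h
  obtain ⟨g, -, hg⟩ := exists_dual_vector ℝ (u - v) (norm_ne_zero_iff.mpr hne)
  exact ⟨g, by rw [hg]; exact_mod_cast norm_pos_iff.mpr hne⟩

theorem subset_qpolar (hT : QuasiMono T) : T ⊆ qpolar T :=
  fun p hp q hq => hT p hp q hq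

theorem Vset_mono (hST : S ⊆ T) (x : X) : Vset S x ⊆ Vset T x :=
  fun _ ⟨y', hy', hpos⟩ => ⟨y', hST hy', hpos⟩

theorem Eset_anti (hST : S ⊆ T) : Eset T ⊆ Eset S :=
  fun x hx => Set.subset_eq_empty (Vset_mono hST x) hx

theorem mk_mem_qpolar_of_mem_Eset {x : X} (hx : x ∈ Eset T) (v : StrongDual ℝ X) :
    (x, v) ∈ qpolar T := by
  intro q hq
  have hq_le : q.2 (x - q.1) ≤ 0 := by
    by_contra! hpos
    exact (Set.eq_empty_iff_forall_notMem.mp hx) q.1 ⟨q.2, hq, hpos⟩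
  exact (min_le_right _ _).trans hq_le

theorem Eset_qpolar_subsingleton (hT : QuasiMono T) : (Eset (qpolar T)).Subsingleton := by
  intro x hx y hy
  by_contra hne
  obtain ⟨g, hg⟩ := exists_dual_pos_of_ne hne
  have hyg : (y, g) ∈ qpolar T := mk_mem_qpolar_of_mem_Eset (Eset_anti (subset_qpolar hT) hy) g
  exact (Set.eq_empty_iff_forall_notMem.mp hx) y ⟨g, hyg, hg⟩

theorem Eset_subset_Eset_qpolar (hQ : QuasiMono (qpolar T)) : Eset T ⊆ Eset (qpolar T) := by
  intro x hx
  refine Set.eq_empty_iff_forall_notMem.mpr fun y ⟨y', hy', hpos⟩ => ?_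
  have hne : y ≠ x := by
    rintro rfl
    simp at hpos
  obtain ⟨g, hg⟩ := exists_dual_pos_of_ne hne
  have hrel : qrel (x, g) (y, y') := hQ _ (mk_mem_qpolar_of_mem_Eset hx g) _ hy'
  exact (lt_min hg hpos).not_ge hrel

end

theorem stmt18_general (T : Set (X × StrongDual ℝ X)) (hT : QuasiMono T) :
    (Eset (qpolar T)).Subsingleton ∧
    (QuasiMono (qpolar T) → Eset T = Eset (qpolar T) ∧ (Eset T).Subsingleton) := by
  refine ⟨Eset_qpolar_subsingleton hT, fun hQ => ?_⟩
  have hEq : Eset T = Eset (qpolar T) :=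
    (Eset_subset_Eset_qpolar hQ).antisymm (Eset_anti (subset_qpolar hT))
  exact ⟨hEq, hEq ▸ Eset_qpolar_subsingleton hT⟩

theorem stmt18 [CompleteSpace X] (T : Set (X × StrongDual ℝ X)) (hT : QuasiMono T) :
    (Eset (qpolar T)).Subsingleton ∧
    (QuasiMono (qpolar T) → Eset T = Eset (qpolar T) ∧ (Eset T).Subsingleton) :=
  stmt18_general T hT
end
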